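/- arXiv:1906.08446 — 4 statements merged into one kernel-verified Lean document; each statement's English description precedes it below -/
import Mathlib

section
/- Let Λ be a countable set, P a substochastic matrix on Λ, U ⊆ Λ, V : Λ → (0,∞), ρ ∈ (0,1), C > 0 and K > 0 such that: (i) Σ_{y∈Λ} P(x,y)V(y) ≤ ρ V(x) for every x ∉ U; (ii) Σ_{y∈Λ} P(x,y)V(y) ≤ C V(x) for every x ∈ Λ; and (iii) V(x) ≥ K for every x ∉ U. Then for every x ∈ Λ with V(x) ≤ K and every n ≥ 1, Σ_{x_1,…,x_n ∈ Λ∖U} P(x,x_1)P(x_1,x_2)⋯P(x_{n−1},x_n) ≤ C ρ^{n−1}. (In Markov-chain language: the probability, starting from x, of surviving n steps while avoiding U is at most Cρ^{n−1}.) -/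
/-!
Off `U`, the function `V / K` dominates `survive 0 = 1` by (iii), and the drift (i) lets each
further step contribute a factor `ρ`, so `survive n ≤ ρⁿ V / K` there. One last step from a
start `x` with `V x ≤ K`, controlled by the global bound (ii), gives `C ρ^(n-1)`.
-/

open Filter Topology

open Classical in
/-- `survive P U n x = Σ_{x₁,…,xₙ ∈ Λ∖U} P(x,x₁)P(x₁,x₂)⋯P(x_{n−1},xₙ)`:
the probability, starting from `x`, of surviving `n` steps of the (sub-Markovian) chain
with transition matrix `P` while avoiding the set `U`. -/
noncomputable def survive {Λ : Type*} (P : Λ → Λ → ℝ) (U : Set Λ) : ℕ → Λ → ℝ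
  | 0 => fun _ => 1
  | n + 1 => fun x => ∑' y, (if y ∈ U then 0 else P x y) * survive P U n y

section Survive

variable {Λ : Type*} {P : Λ → Λ → ℝ} {U : Set Λ}

lemma survive_nonneg (hP0 : ∀ x y, 0 ≤ P x y) (n : ℕ) (x : Λ) : 0 ≤ survive P U n x := by
  induction n generalizing x with
  | zero => simp [survive]
  | succ n ih =>
    classical
    refine tsum_nonneg fun y => mul_nonneg ?_ (ih y)
    split_ifs
    exacts [le_rfl, hP0 x y]

lemma survive_succ_le_mul_tsum {V : Λ → ℝ} {c : ℝ} {n : ℕ} {x : Λ}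
    (hP0 : ∀ x y, 0 ≤ P x y) (hV : ∀ y, 0 ≤ V y) (hc : 0 ≤ c)
    (hVsum : Summable fun y => P x y * V y)
    (hn : ∀ y, y ∉ U → survive P U n y ≤ c * V y) :
    survive P U (n + 1) x ≤ c * ∑' y, P x y * V y := by
  classical
  have hpt : ∀ y, (if y ∈ U then 0 else P x y) * survive P U n y ≤ c * (P x y * V y) := by
    intro y
    split_ifs with hy
    · simpa using mul_nonneg hc (mul_nonneg (hP0 x y) (hV y))
    · calc P x y * survive P U n y ≤ P x y * (c * V y) :=
            mul_le_mul_of_nonneg_left (hn y hy) (hP0 x y)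
        _ = c * (P x y * V y) := by ring
  have hsum : Summable fun y => c * (P x y * V y) := hVsum.mul_left c
  have hnonneg : ∀ y, 0 ≤ (if y ∈ U then 0 else P x y) * survive P U n y := fun y =>
    mul_nonneg (by split_ifs; exacts [le_rfl, hP0 x y]) (survive_nonneg hP0 n y)
  calc survive P U (n + 1) x = ∑' y, (if y ∈ U then 0 else P x y) * survive P U n y := rfl
    _ ≤ ∑' y, c * (P x y * V y) := (hsum.of_nonneg_of_le hnonneg hpt).tsum_le_tsum hpt hsum
    _ = c * ∑' y, P x y * V y := tsum_mul_left

lemma survive_le_of_drift {V : Λ → ℝ} {ρ K : ℝ}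
    (hP0 : ∀ x y, 0 ≤ P x y) (hV : ∀ y, 0 ≤ V y) (hρ : 0 ≤ ρ) (hK : 0 < K)
    (hVsum : ∀ x, Summable fun y => P x y * V y)
    (hdrift : ∀ x, x ∉ U → (∑' y, P x y * V y) ≤ ρ * V x)
    (hVK : ∀ x, x ∉ U → K ≤ V x) (n : ℕ) :
    ∀ y, y ∉ U → survive P U n y ≤ ρ ^ n / K * V y := by
  induction n with
  | zero =>
    intro y hy
    rw [survive, pow_zero, one_div_mul_eq_div, one_le_div hK]
    exact hVK y hy
  | succ n ih =>
    intro y hy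
    calc survive P U (n + 1) y ≤ ρ ^ n / K * ∑' z, P y z * V z :=
          survive_succ_le_mul_tsum hP0 hV (by positivity) (hVsum y) ih
      _ ≤ ρ ^ n / K * (ρ * V y) := by gcongr; exact hdrift y hy
      _ = ρ ^ (n + 1) / K * V y := by ring

end Survive

theorem survival_avoiding_U_bound_general
    {Λ : Type*}
    (P : Λ → Λ → ℝ)
    -- substochastic
    (hP0 : ∀ x y, 0 ≤ P x y)
    (U : Set Λ)
    (V : Λ → ℝ) (hV : ∀ x, 0 < V x)
    (ρ C K : ℝ) (hρ0 : 0 < ρ) (hC : 0 < C) (hK : 0 < K)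
    (hVsum : ∀ x, Summable fun y => P x y * V y)
    -- (i) drift outside U
    (hdrift : ∀ x, x ∉ U → (∑' y, P x y * V y) ≤ ρ * V x)
    -- (ii) global bound
    (hbound : ∀ x, (∑' y, P x y * V y) ≤ C * V x)
    -- (iii) V is at least K outside U
    (hVK : ∀ x, x ∉ U → K ≤ V x) :
    ∀ x, V x ≤ K → ∀ n : ℕ, 1 ≤ n → survive P U n x ≤ C * ρ ^ (n - 1) := by
  intro x hx n hn
  obtain ⟨m, rfl⟩ : ∃ m, n = m + 1 := ⟨n - 1, by omega⟩
  have hV' : ∀ y, 0 ≤ V y := fun y => (hV y).le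
  have hoff := survive_le_of_drift hP0 hV' hρ0.le hK hVsum hdrift hVK m
  calc survive P U (m + 1) x ≤ ρ ^ m / K * ∑' y, P x y * V y :=
        survive_succ_le_mul_tsum hP0 hV' (by positivity) (hVsum x) hoff
    _ ≤ ρ ^ m / K * (C * K) := by gcongr; exact (hbound x).trans (by gcongr)
    _ = C * ρ ^ (m + 1 - 1) := by field_simp; simp

/-- under a Lyapunov drift condition outside `U`, the probability of
surviving `n` steps while avoiding `U`, starting from a point with `V(x) ≤ K`,
is at most `C ρ^{n−1}`. -/
theorem survival_avoiding_U_bound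
    {Λ : Type*} [Countable Λ]
    (P : Λ → Λ → ℝ)
    -- substochastic
    (hP0 : ∀ x y, 0 ≤ P x y)
    (hPsum : ∀ x, Summable (P x))
    (hP1 : ∀ x, ∑' y, P x y ≤ 1)
    (U : Set Λ)
    (V : Λ → ℝ) (hV : ∀ x, 0 < V x)
    (ρ C K : ℝ) (hρ0 : 0 < ρ) (hρ1 : ρ < 1) (hC : 0 < C) (hK : 0 < K)
    (hVsum : ∀ x, Summable fun y => P x y * V y)
    -- (i) drift outside U
    (hdrift : ∀ x, x ∉ U → (∑' y, P x y * V y) ≤ ρ * V x)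
    -- (ii) global bound
    (hbound : ∀ x, (∑' y, P x y * V y) ≤ C * V x)
    -- (iii) V is at least K outside U
    (hVK : ∀ x, x ∉ U → K ≤ V x) :
    ∀ x, V x ≤ K → ∀ n : ℕ, 1 ≤ n → survive P U n x ≤ C * ρ ^ (n - 1) :=
  survival_avoiding_U_bound_general P hP0 U V hV ρ C K hρ0 hC hK hVsum hdrift hbound hVK
end

section
/- Let Λ be a countable set, (Ω, F, P) a probability space, and (Z_n)_{n≥0} measurable random elements of the set of finitely supported functions Λ → ℕ, with the absorption property: if Z_n(ω) = 0 (the zero function) then Z_m(ω) = 0 for all m ≥ n. Let Ω_surv := {ω : Z_n(ω) ≠ 0 for all n ≥ 0}. Let s ∈ [0,1]^Λ and suppose that the expectation E[∏_{w ∈ supp Z_n} s_w^{Z_n(w)}] equals a constant c independent of n. Suppose moreover there is y ∈ Λ with s_y < 1 such that P({Z_n(y) ≤ K} ∩ Ω_surv) → 0 as n → ∞ for every K ∈ ℕ. Then c = P(Ω_surv^c). (This is the identification, in the proof of Corollary 3.2, of any fixed-point value s_x of the generating function with the extinction probability.) -/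
open Filter Topology MeasureTheory

/-!
Write `f n = ∏_{w ∈ supp Zₙ} s_w^{Zₙ(w)} ∈ [0, 1]`. On the extinction event `f n` is eventually
the empty product `1`, so by dominated convergence its integral there tends to `P(Ω_survᶜ)`. On
the survival event `f n ≤ s_y^{Zₙ(y)}`, which is at most `s_y^K` off the event `{Zₙ(y) ≤ K}`
whose probability tends to `0`; hence the integral there tends to `0`. The constant `c` is
therefore the limit `P(Ω_survᶜ)`.
-/

section FinsuppPowProd

variable {Λ : Type*} {s : Λ → ℝ}

lemma prod_support_pow_nonneg (hs : ∀ w, s w ∈ Set.Icc (0 : ℝ) 1) (η : Λ →₀ ℕ) :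
    0 ≤ ∏ w ∈ η.support, s w ^ η w :=
  Finset.prod_nonneg fun w _ => pow_nonneg (hs w).1 _

lemma prod_support_pow_le_pow_apply (hs : ∀ w, s w ∈ Set.Icc (0 : ℝ) 1) (η : Λ →₀ ℕ) (y : Λ) :
    ∏ w ∈ η.support, s w ^ η w ≤ s y ^ η y := by
  by_cases hy : y ∈ η.support
  · simpa using Finset.prod_le_prod_of_subset_of_le_one (Finset.singleton_subset_iff.2 hy)
      (fun w _ => pow_nonneg (hs w).1 _) (fun w _ _ => pow_le_one₀ (hs w).1 (hs w).2)
  · rw [Finsupp.notMem_support_iff.1 hy, pow_zero]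
    exact Finset.prod_le_one (fun w _ => pow_nonneg (hs w).1 _)
      (fun w _ => pow_le_one₀ (hs w).1 (hs w).2)

end FinsuppPowProd

section SetIntegralLimits

variable {Ω : Type*} [MeasurableSpace Ω] {μ : Measure Ω} [IsFiniteMeasure μ] {f : ℕ → Ω → ℝ}

lemma tendsto_setIntegral_of_eventually_eq_one {E : Set Ω} (hE : MeasurableSet E)
    (hfm : ∀ n, AEStronglyMeasurable (f n) μ) (hf : ∀ n ω, ‖f n ω‖ ≤ 1)
    (hf_one : ∀ ω ∈ E, ∀ᶠ n in atTop, f n ω = 1) :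
    Tendsto (fun n => ∫ ω in E, f n ω ∂μ) atTop (𝓝 (μ.real E)) := by
  have hlim : ∀ᵐ ω ∂μ.restrict E, Tendsto (fun n => f n ω) atTop (𝓝 1) := by
    rw [ae_restrict_iff' hE]
    exact ae_of_all _ fun ω hω => tendsto_nhds_of_eventually_eq (hf_one ω hω)
  simpa using tendsto_integral_of_dominated_convergence (fun _ => 1)
    (fun n => (hfm n).restrict) (integrable_const 1) (fun n => ae_of_all _ (hf n)) hlim

lemma tendsto_setIntegral_zero_of_le_pow {S : Set Ω} {g : ℕ → Ω → ℕ} {r : ℝ}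
    (hr0 : 0 ≤ r) (hr1 : r < 1) (hfm : ∀ n, AEStronglyMeasurable (f n) μ)
    (hf0 : ∀ n ω, 0 ≤ f n ω) (hfg : ∀ n ω, f n ω ≤ r ^ g n ω)
    (hgm : ∀ n K, MeasurableSet {ω | g n ω ≤ K})
    (hg : ∀ K, Tendsto (fun n => μ ({ω | g n ω ≤ K} ∩ S)) atTop (𝓝 0)) :
    Tendsto (fun n => ∫ ω in S, f n ω ∂μ) atTop (𝓝 0) := by
  have hbound : ∀ n K, ∫ ω in S, f n ω ∂μ ≤ μ.real ({ω | g n ω ≤ K} ∩ S) + r ^ K * μ.real S := by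
    intro n K
    set A := {ω | g n ω ≤ K}
    have hle : ∀ ω, f n ω ≤ A.indicator 1 ω + r ^ K := by
      intro ω
      by_cases hω : ω ∈ A
      · simp only [Set.indicator_of_mem hω, Pi.one_apply]
        linarith [hfg n ω, pow_le_one₀ (n := g n ω) hr0 hr1.le, pow_nonneg hr0 K]
      · simp only [Set.indicator_of_notMem hω, zero_add]
        exact (hfg n ω).trans (pow_le_pow_of_le_one hr0 hr1.le (not_le.1 hω).le)
    have hfi : Integrable (f n) μ := Integrable.of_bound (hfm n) 1 (ae_of_all _ fun ω => by
      rw [Real.norm_of_nonneg (hf0 n ω)]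
      exact (hfg n ω).trans (pow_le_one₀ hr0 hr1.le))
    calc ∫ ω in S, f n ω ∂μ ≤ ∫ ω in S, (A.indicator 1 ω + r ^ K) ∂μ :=
          setIntegral_mono hfi.integrableOn
            (((integrable_const 1).indicator (hgm n K)).add (integrable_const _)).integrableOn hle
      _ = μ.real (A ∩ S) + r ^ K * μ.real S := by
          rw [integral_add ((integrable_const 1).indicator (hgm n K)).restrict
            (integrable_const _), integral_indicator_one (hgm n K),
            measureReal_restrict_apply (hgm n K), setIntegral_const, smul_eq_mul, mul_comm]
  refine tendsto_order.2 ⟨fun a ha => Eventually.of_forall fun n =>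
    ha.trans_le (integral_nonneg fun ω => hf0 n ω), fun a ha => ?_⟩
  obtain ⟨K, hK⟩ := ((tendsto_pow_atTop_nhds_zero_of_lt_one hr0 hr1).mul_const
    (μ.real S)).eventually (gt_mem_nhds (by rw [zero_mul]; exact half_pos ha)) |>.exists
  have hsmall : Tendsto (fun n => μ.real ({ω | g n ω ≤ K} ∩ S)) atTop (𝓝 0) :=
    (ENNReal.tendsto_toReal ENNReal.zero_ne_top).comp (hg K)
  filter_upwards [hsmall.eventually (gt_mem_nhds (half_pos ha))] with n hn
  linarith [hbound n K]

end SetIntegralLimits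

theorem fixed_point_value_is_extinction_probability_general
    {Λ : Type*}
    {Ω : Type*} [MeasurableSpace Ω] (P : Measure Ω) [IsProbabilityMeasure P]
    (Z : ℕ → Ω → (Λ →₀ ℕ))
    -- measurability of the random elements Zₙ
    (hZmeas : ∀ n, ∀ A : Set (Λ →₀ ℕ), MeasurableSet (Z n ⁻¹' A))
    -- absorption: once extinct, always extinct
    (habs : ∀ ω, ∀ n m : ℕ, n ≤ m → Z n ω = 0 → Z m ω = 0)
    (s : Λ → ℝ) (hs : ∀ y, s y ∈ Set.Icc (0 : ℝ) 1)
    (c : ℝ)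
    -- the expectation is constant in n
    (hc : ∀ n : ℕ, (∫ ω, (∏ w ∈ (Z n ω).support, s w ^ (Z n ω w)) ∂P) = c)
    (y : Λ) (hsy : s y < 1)
    -- on the survival event, Zₙ(y) → ∞ in probability
    (hgrow : ∀ K : ℕ,
      Tendsto (fun n : ℕ =>
          P ({ω | Z n ω y ≤ K} ∩ {ω | ∀ m : ℕ, Z m ω ≠ 0})) atTop (𝓝 0)) :
    c = (P ({ω | ∀ m : ℕ, Z m ω ≠ 0}ᶜ)).toReal := by
  set S : Set Ω := {ω | ∀ m : ℕ, Z m ω ≠ 0}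
  set f : ℕ → Ω → ℝ := fun n ω => ∏ w ∈ (Z n ω).support, s w ^ (Z n ω w)
  have hS : MeasurableSet S := by
    have : S = ⋂ m, (Z m ⁻¹' {0})ᶜ := by ext ω; simp [S]
    exact this ▸ MeasurableSet.iInter fun m => (hZmeas m {0}).compl
  have hfm : ∀ n, AEStronglyMeasurable (f n) P := fun n =>
    (show Measurable (f n) from fun B _ =>
      hZmeas n ((fun η : Λ →₀ ℕ => ∏ w ∈ η.support, s w ^ η w) ⁻¹' B)).aestronglyMeasurable
  have hf0 : ∀ n ω, 0 ≤ f n ω := fun n ω => prod_support_pow_nonneg hs (Z n ω)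
  have hfy : ∀ n ω, f n ω ≤ s y ^ Z n ω y := fun n ω => prod_support_pow_le_pow_apply hs (Z n ω) y
  have hf1 : ∀ n ω, ‖f n ω‖ ≤ 1 := fun n ω => by
    rw [Real.norm_of_nonneg (hf0 n ω)]
    exact (hfy n ω).trans (pow_le_one₀ (hs y).1 (hs y).2)
  have hext : Tendsto (fun n => ∫ ω in Sᶜ, f n ω ∂P) atTop (𝓝 (P.real Sᶜ)) := by
    refine tendsto_setIntegral_of_eventually_eq_one hS.compl hfm hf1 fun ω hω => ?_
    obtain ⟨m, hm⟩ : ∃ m, Z m ω = 0 := by simpa [S] using hω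
    filter_upwards [eventually_ge_atTop m] with n hn
    simp [f, habs ω m n hn hm]
  have hsurv : Tendsto (fun n => ∫ ω in S, f n ω ∂P) atTop (𝓝 0) :=
    tendsto_setIntegral_zero_of_le_pow (hs y).1 hsy hfm hf0 hfy
      (fun n K => hZmeas n {η | η y ≤ K}) hgrow
  have hlim : Tendsto (fun n => ∫ ω, f n ω ∂P) atTop (𝓝 (P.real Sᶜ)) := by
    have hfi : ∀ n, Integrable (f n) P := fun n => .of_bound (hfm n) 1 (ae_of_all _ (hf1 n))
    simpa only [integral_add_compl hS (hfi _), zero_add] using hsurv.add hext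
  exact tendsto_nhds_unique (tendsto_const_nhds.congr fun n => (hc n).symm) hlim

/-- if the expectation `E[∏_{w ∈ supp Zₙ} s_w^{Zₙ(w)}]` is a constant
`c` independent of `n`, absorption at `0` holds, and some coordinate `y` with `s_y < 1`
tends to infinity in probability on the survival event, then `c` equals the probability
of the extinction event `Ω_surv^c`. -/
theorem fixed_point_value_is_extinction_probability
    {Λ : Type*} [Countable Λ]
    {Ω : Type*} [MeasurableSpace Ω] (P : Measure Ω) [IsProbabilityMeasure P]
    (Z : ℕ → Ω → (Λ →₀ ℕ))
    -- measurability of the random elements Zₙ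
    (hZmeas : ∀ n, ∀ A : Set (Λ →₀ ℕ), MeasurableSet (Z n ⁻¹' A))
    -- absorption: once extinct, always extinct
    (habs : ∀ ω, ∀ n m : ℕ, n ≤ m → Z n ω = 0 → Z m ω = 0)
    (s : Λ → ℝ) (hs : ∀ y, s y ∈ Set.Icc (0 : ℝ) 1)
    (c : ℝ)
    -- the expectation is constant in n
    (hc : ∀ n : ℕ, (∫ ω, (∏ w ∈ (Z n ω).support, s w ^ (Z n ω w)) ∂P) = c)
    (y : Λ) (hsy : s y < 1)
    -- on the survival event, Zₙ(y) → ∞ in probability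
    (hgrow : ∀ K : ℕ,
      Tendsto (fun n : ℕ =>
          P ({ω | Z n ω y ≤ K} ∩ {ω | ∀ m : ℕ, Z m ω ≠ 0})) atTop (𝓝 0)) :
    c = (P ({ω | ∀ m : ℕ, Z m ω ≠ 0}ᶜ)).toReal :=
  fixed_point_value_is_extinction_probability_general P Z hZmeas habs s hs c hc y hsy hgrow
end

section
/- With the tumor growth rates matrix à as in the context, suppose there exists V : Λ₀ → [0,∞) with V(0) = 0, V(x) > 0 for x ∈ Λ, such that: (i) {x ∈ Λ : V(x) ≤ M} is finite for every M > 0; (ii) Σ_{y∈Λ₀} q(x,y)V(y) is absolutely convergent for every x ∈ Λ; and (iii) {x ∈ Λ : Σ_{y∈Λ₀} q(x,y)V(y) ≥ −M V(x)} is finite for every M > 0 (i.e., the drift of V under Q tends to −∞ relative to V along the cofinite filter). Then for every x ∈ Λ the identity Σ_{y∈Λ} ã(x,y)V(y) = Σ_{y∈Λ₀} q(x,y)V(y) + β(x)V(1) − β̄ V(x) holds, and for every M > 0 the set {x ∈ Λ : Σ_{y∈Λ} ã(x,y)V(y) ≥ −M V(x)} is finite; that is, à satisfies the Lyapunov condition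 of the paper's Theorem 2.1. (This is the reduction in the proof of Proposition 3.3 under condition (1).) -/
/-!
The `Ã`-drift of `V` is the `Q₀`-drift plus `β(x)V(1) − β̄V(x)` (the state `0` contributes
nothing since `V(0) = 0`), and this correction is at most the constant `β̄V(1)`. A drift that
exceeds `−M V(x)` after adding a constant `C` exceeds `−(M+1) V(x)` as soon as `V(x) > C`, so the
new superlevel set lies in a sublevel set of `V` union a superlevel set of the `Q₀`-drift.
-/

open Filter Topology

/-- The killed mean-growth rates matrix of the tumor growth model:
`ã(x,y) = q(x,y) + β(x)·1{y=1} − β̄·1{y=x}` for `x, y ∈ Λ`, where the state space is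
`Λ₀ = Λ ∪ {0}` (modelled as `Option Λ`, with `none` playing the role of the absorbing
state `0`), `one : Λ` is the distinguished state `1`, and `β̄ = ⨆ x, β x`. -/
noncomputable def atilde {Λ : Type*} [DecidableEq Λ]
    (q : Option Λ → Option Λ → ℝ) (β : Λ → ℝ) (one : Λ) (x y : Λ) : ℝ :=
  q (some x) (some y) + (if y = one then β x else 0) - (if y = x then ⨆ x', β x' else 0)

theorem hasSum_comp_some_iff {α M : Type*} [AddCommMonoid M] [TopologicalSpace M]
    {f : Option α → M} {a : M} (hf : f none = 0) : HasSum (f ∘ some) a ↔ HasSum f a :=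
  (Option.some_injective α).hasSum_iff fun
    | none, _ => hf
    | some x, hx => absurd ⟨x, rfl⟩ hx

theorem hasSum_atilde_mul {Λ : Type*} [DecidableEq Λ] {q : Option Λ → Option Λ → ℝ}
    {β : Λ → ℝ} {one x : Λ} {V : Option Λ → ℝ} (hV0 : V none = 0)
    (hV : Summable fun y => q (some x) y * V y) :
    HasSum (fun y => atilde q β one x y * V (some y))
      ((∑' y, q (some x) y * V y) + β x * V (some one) - (⨆ x', β x') * V (some x)) := by
  have hq : HasSum (fun y : Λ => q (some x) (some y) * V (some y)) (∑' y, q (some x) y * V y) :=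
    (hasSum_comp_some_iff (f := fun y => q (some x) y * V y) (by simp [hV0])).2 hV.hasSum
  have hone := hasSum_ite_eq one (β x * V (some one))
  have hdiag := hasSum_ite_eq x ((⨆ x', β x') * V (some x))
  refine ((hq.add hone).sub hdiag).congr_fun fun y => ?_
  simp only [atilde]
  split_ifs <;> subst_vars <;> ring

theorem finite_setOf_neg_mul_le_of_le_add {ι : Type*} {V D D' : ι → ℝ} {M C : ℝ}
    (hV : {x | V x ≤ C}.Finite) (hD : {x | -(M + 1) * V x ≤ D x}.Finite)
    (hle : ∀ x, D' x ≤ D x + C) : {x | -M * V x ≤ D' x}.Finite := by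
  refine (hV.union hD).subset fun x (hx : -M * V x ≤ D' x) => ?_
  by_cases hVC : V x ≤ C
  · exact Or.inl hVC
  · exact Or.inr (show -(M + 1) * V x ≤ D x by linarith [hle x, not_le.1 hVC])

theorem tumor_lyapunov_reduction_general
    {Λ : Type*} [DecidableEq Λ]
    (q : Option Λ → Option Λ → ℝ)
    (one : Λ)
    (β : Λ → ℝ) (hβpos : ∀ x, 0 < β x) (hβbdd : BddAbove (Set.range β))
    (V : Option Λ → ℝ) (hV0 : V none = 0) (hVpos : ∀ x : Λ, 0 < V (some x))
    -- (i) sublevel sets of V are finite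
    (hVfin : ∀ M : ℝ, 0 < M → {x : Λ | V (some x) ≤ M}.Finite)
    -- (ii) the drift of V under Q is absolutely convergent
    (hVsum : ∀ x : Λ, Summable fun y : Option Λ => q (some x) y * V y)
    -- (iii) the drift of V under Q tends to −∞ relative to V
    (hdrift : ∀ M : ℝ, 0 < M →
      {x : Λ | -M * V (some x) ≤ ∑' y : Option Λ, q (some x) y * V y}.Finite) :
    (∀ x : Λ,
      (∑' y : Λ, atilde q β one x y * V (some y))
        = (∑' y : Option Λ, q (some x) y * V y) + β x * V (some one)
          - (⨆ x', β x') * V (some x)) ∧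
    (∀ M : ℝ, 0 < M →
      {x : Λ | -M * V (some x) ≤ ∑' y : Λ, atilde q β one x y * V (some y)}.Finite) := by
  have hdrift_eq : ∀ x : Λ, (∑' y : Λ, atilde q β one x y * V (some y))
      = (∑' y : Option Λ, q (some x) y * V y) + β x * V (some one)
        - (⨆ x', β x') * V (some x) :=
    fun x => (hasSum_atilde_mul hV0 (hVsum x)).tsum_eq
  refine ⟨hdrift_eq, fun M hM => ?_⟩
  have hβle : ∀ x, β x ≤ ⨆ x', β x' := le_ciSup hβbdd
  have hβsup : 0 < ⨆ x', β x' := (hβpos one).trans_le (hβle one)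
  refine finite_setOf_neg_mul_le_of_le_add (hVfin _ (mul_pos hβsup (hVpos one)))
    (hdrift (M + 1) (by linarith)) fun x => ?_
  have hone : β x * V (some one) ≤ (⨆ x', β x') * V (some one) :=
    mul_le_mul_of_nonneg_right (hβle x) (hVpos one).le
  have hdiag : 0 ≤ (⨆ x', β x') * V (some x) := (mul_pos hβsup (hVpos x)).le
  rw [hdrift_eq]
  linarith

/-- reduction in the proof of Proposition 3.3, condition (1):
if `V` is a Lyapunov function for the absorbed rates matrix `Q₀` whose drift tends to
`−∞` relative to `V`, then the drift identity
`Σ_{y∈Λ} ã(x,y)V(y) = Σ_{y∈Λ₀} q(x,y)V(y) + β(x)V(1) − β̄V(x)` holds and `Ã`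
satisfies the same Lyapunov condition. -/
theorem tumor_lyapunov_reduction
    {Λ : Type*} [Countable Λ] [Infinite Λ] [DecidableEq Λ]
    (q : Option Λ → Option Λ → ℝ)
    -- Q₀ is a rates matrix absorbed at 0 = none
    (hq_off : ∀ x y : Option Λ, x ≠ y → 0 ≤ q x y)
    (hq_row : ∀ x : Option Λ, HasSum (q x) 0)
    (hq_abs : ∀ y : Option Λ, q none y = 0)
    (one : Λ)
    (β : Λ → ℝ) (hβpos : ∀ x, 0 < β x) (hβbdd : BddAbove (Set.range β))
    (V : Option Λ → ℝ) (hV0 : V none = 0) (hVpos : ∀ x : Λ, 0 < V (some x))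
    -- (i) sublevel sets of V are finite
    (hVfin : ∀ M : ℝ, 0 < M → {x : Λ | V (some x) ≤ M}.Finite)
    -- (ii) the drift of V under Q is absolutely convergent
    (hVsum : ∀ x : Λ, Summable fun y : Option Λ => q (some x) y * V y)
    -- (iii) the drift of V under Q tends to −∞ relative to V
    (hdrift : ∀ M : ℝ, 0 < M →
      {x : Λ | -M * V (some x) ≤ ∑' y : Option Λ, q (some x) y * V y}.Finite) :
    (∀ x : Λ,
      (∑' y : Λ, atilde q β one x y * V (some y))
        = (∑' y : Option Λ, q (some x) y * V y) + β x * V (some one)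
          - (⨆ x', β x') * V (some x)) ∧
    (∀ M : ℝ, 0 < M →
      {x : Λ | -M * V (some x) ≤ ∑' y : Λ, atilde q β one x y * V (some y)}.Finite) :=
  tumor_lyapunov_reduction_general q one β hβpos hβbdd V hV0 hVpos hVfin hVsum hdrift
end

section
/- Let Λ = {1, 2, 3, …} and let Q₀ be the rates matrix of a birth-and-death process absorbed at 0: q(x,x+1) = b(x) > 0 for x ≥ 1, q(x,x−1) = d(x) > 0 for x ≥ 2, q(1,0) = d(1) > 0, q(x,y) = 0 for all other y ≠ x, and q(x,x) = −(b(x)+d(x)). Let β : Λ → (0,∞) be bounded with β̄ := sup_x β(x), and let ã(x,y) := q(x,y) + β(x)·1{y=1} − β̄·1{y=x} for x, y ∈ Λ. Assume: (a) d is nondecreasing; (b) lim_{x→∞} b(x)/d(x) = ℓ for some ℓ < 1; and (c) Σ_{x=1}^∞ 1/d(x) < ∞. Then, with V(x) = x, lim_{x→∞} (Σ_{y∈Λ} ã(x,y)·y)/x = −∞; that is, à satisfies the Lyapunov condition of the paper's Theorem 2.1 with the linear Lyapunov function. (This is the key verification in the proof of Corollary 3.5.) -/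
open Filter Topology

/-- The rates matrix of a birth-and-death process on `ℕ` absorbed at `0`, with birth
rates `b` and death rates `d`: `q(x,x+1) = b(x)`, `q(x,x−1) = d(x)` (so `q(1,0) = d(1)`),
`q(x,x) = −(b(x)+d(x))` for `x ≥ 1`, and `q(0,·) = 0`. -/
noncomputable def qbd (b d : ℕ → ℝ) (x y : ℕ) : ℝ :=
  if x = 0 then 0
  else if y = x + 1 then b x
  else if y + 1 = x then d x
  else if y = x then -(b x + d x)
  else 0

/-- The killed mean-growth rates matrix `ã(x,y) = q(x,y) + β(x)·1{y=1} − β̄·1{y=x}`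
of the tumor growth model, for the birth-and-death rates `qbd b d`, where
`β̄ = sup_{x≥1} β(x)`. -/
noncomputable def atildeBD (b d β : ℕ → ℝ) (x y : ℕ) : ℝ :=
  qbd b d x y + (if y = 1 then β x else 0)
    - (if y = x then (⨆ x' : {n : ℕ // 1 ≤ n}, β (x' : ℕ)) else 0)

/-!
For `x ≥ 2` only `y = x - 1, x, x + 1` and `y = 1` contribute, and
`∑_y ã(x,y) y = b(x) - d(x) + β(x) - β̄ x`. Eventually `b(x) ≤ c d(x)` for some `c < 1`, so the
quotient by `x` is at most `(c - 1) d(x)/x + O(1)`. Finally `d(x)/x → ∞` by Olivier's theorem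
(`n f(n) → 0` for a nonincreasing summable `f`) applied to `f = 1/d`.
-/

local notation "Λ" => {n : ℕ // 1 ≤ n}

lemma Antitone.tendsto_nat_mul_of_summable {f : ℕ → ℝ} (hf : Antitone f) (hs : Summable f) :
    Tendsto (fun n : ℕ => (n : ℝ) * f n) atTop (𝓝 0) := by
  have hnonneg : ∀ n, 0 ≤ f n := fun n =>
    not_lt.1 fun hneg => not_summable_of_antitone_of_neg hf hneg hs
  have htail : Tendsto (fun n : ℕ => 2 * ∑' k, f (k + n / 2)) atTop (𝓝 0) := by
    simpa using ((tendsto_sum_nat_add f).comp (Nat.tendsto_div_const_atTop two_ne_zero)).const_mul 2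
  refine squeeze_zero (fun n => mul_nonneg n.cast_nonneg (hnonneg n)) (fun n => ?_) htail
  -- the `n - n / 2 ≥ n / 2` terms of index in `[n / 2, n)` are each at least `f n`
  calc (n : ℝ) * f n ≤ 2 * (((n - n / 2 : ℕ) : ℝ) * f n) := by
        rw [← mul_assoc]
        gcongr
        · exact hnonneg n
        · norm_cast; omega
    _ ≤ 2 * ∑ k ∈ Finset.Ico (n / 2) n, f k := by
        gcongr
        rw [← Nat.card_Ico, ← nsmul_eq_mul]
        exact Finset.card_nsmul_le_sum _ _ _ fun k hk => hf (Finset.mem_Ico.1 hk).2.le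
    _ ≤ 2 * ∑' k, f (k + n / 2) := by
        gcongr
        rw [Finset.sum_Ico_eq_sum_range]
        simp_rw [add_comm (n / 2)]
        exact Summable.sum_le_tsum _ (fun k _ => hnonneg _) ((summable_nat_add_iff _).2 hs)

lemma tendsto_div_atTop_of_summable_one_div {d : ℕ → ℝ} (hd : ∀ x, 1 ≤ x → 0 < d x)
    (hmono : ∀ x, 1 ≤ x → d x ≤ d (x + 1)) (hsum : Summable fun x : Λ => 1 / d x) :
    Tendsto (fun x : ℕ => d x / x) atTop atTop := by
  have hanti : Antitone fun n => 1 / d (n + 1) := fun m n hmn =>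
    one_div_le_one_div_of_le (hd _ le_add_self)
      (monotone_nat_of_le_succ (fun n => hmono (n + 1) le_add_self) hmn)
  have hs : Summable fun n => 1 / d (n + 1) :=
    hsum.comp_injective (i := fun n => (⟨n + 1, le_add_self⟩ : Λ)) fun m n h => by simpa using h
  have hlin : Tendsto (fun n : ℕ => ((n + 1 : ℕ) : ℝ) / d (n + 1)) atTop (𝓝 0) := by
    have := (hanti.tendsto_nat_mul_of_summable hs).add hs.tendsto_atTop_zero
    rw [add_zero] at this
    exact this.congr fun n => by push_cast; ring
  have hpos : Tendsto (fun n : ℕ => ((n + 1 : ℕ) : ℝ) / d (n + 1)) atTop (𝓝[>] 0) :=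
    tendsto_nhdsWithin_of_tendsto_nhds_of_eventually_within _ hlin
      (Eventually.of_forall fun n => div_pos (by positivity) (hd _ le_add_self))
  rw [← tendsto_add_atTop_iff_nat 1]
  exact hpos.inv_tendsto_nhdsGT_zero.congr fun n => by simp [inv_div]

lemma hasSum_ite_coe_eq {α M : Type*} [DecidableEq α] [AddCommMonoid M] [TopologicalSpace M]
    {p : α → Prop} {a : α} (ha : p a) (c : M) :
    HasSum (fun y : Subtype p => if (y : α) = a then c else 0) c := by
  simpa [Subtype.ext_iff] using hasSum_ite_eq (⟨a, ha⟩ : Subtype p) c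

lemma hasSum_qbd_mul_coe (b d : ℕ → ℝ) {x : ℕ} (hx : 2 ≤ x) :
    HasSum (fun y : Λ => qbd b d x y * y) (b x - d x) := by
  obtain ⟨n, rfl⟩ : ∃ n, x = n + 2 := ⟨x - 2, by omega⟩
  have h := ((hasSum_ite_coe_eq (p := (1 ≤ ·)) (a := n + 3) (by omega) (b (n + 2) * (n + 3))).add
    (hasSum_ite_coe_eq (p := (1 ≤ ·)) (a := n + 1) (by omega) (d (n + 2) * (n + 1)))).add
    (hasSum_ite_coe_eq (p := (1 ≤ ·)) (a := n + 2) (by omega) (-(b (n + 2) + d (n + 2)) * (n + 2)))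
  convert h using 1
  · funext ⟨y, hy⟩
    simp only [qbd]
    split_ifs <;> (try subst_vars) <;> first | omega | contradiction | (push_cast; ring)
  · ring

lemma hasSum_atildeBD_mul_coe (b d β : ℕ → ℝ) {x : ℕ} (hx : 2 ≤ x) :
    HasSum (fun y : Λ => atildeBD b d β x y * y)
      (b x - d x + β x - (⨆ x' : Λ, β x') * x) := by
  have h := ((hasSum_qbd_mul_coe b d hx).add (hasSum_ite_coe_eq (p := (1 ≤ ·)) le_rfl (β x))).sub
    (hasSum_ite_coe_eq (p := (1 ≤ ·)) (a := x) (by omega) ((⨆ x' : Λ, β x') * x))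
  refine h.congr_fun fun ⟨y, hy⟩ => ?_
  simp only [atildeBD]
  split_ifs <;> simp_all [sub_mul]

theorem tumor_birth_death_lyapunov_general
    (b d β : ℕ → ℝ)
    (hd : ∀ x : ℕ, 1 ≤ x → 0 < d x)
    (hβbdd : BddAbove (Set.range fun x : {n : ℕ // 1 ≤ n} => β (x : ℕ)))
    -- (a) d is nondecreasing
    (hmono : ∀ x : ℕ, 1 ≤ x → d x ≤ d (x + 1))
    -- (b) b(x)/d(x) → ℓ < 1
    (ℓ : ℝ) (hℓ : ℓ < 1)
    (hratio : Tendsto (fun x : ℕ => b x / d x) atTop (𝓝 ℓ))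
    -- (c) Σ_{x≥1} 1/d(x) < ∞
    (hsum : Summable fun x : {n : ℕ // 1 ≤ n} => 1 / d x) :
    Tendsto
      (fun x : ℕ =>
        (∑' y : {n : ℕ // 1 ≤ n}, atildeBD b d β x (y : ℕ) * ((y : ℕ) : ℝ)) / x)
      atTop atBot := by
  set B := ⨆ x' : Λ, β x'
  obtain ⟨c, hℓc, hc1⟩ := exists_between hℓ
  have hmajorant : Tendsto (fun x : ℕ => (c - 1) * (d x / x) + (B / x - B)) atTop atBot :=
    ((tendsto_const_mul_atBot_of_neg (by linarith)).2
      (tendsto_div_atTop_of_summable_one_div hd hmono hsum)).atBot_add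
      ((tendsto_const_div_atTop_nhds_zero_nat B).sub_const B)
  refine tendsto_atBot_mono' atTop ?_ hmajorant
  filter_upwards [hratio.eventually_lt_const hℓc, eventually_ge_atTop 2] with x hbx hx
  have hdx : 0 < d x := hd x (by omega)
  have hβx : β x ≤ B := le_ciSup hβbdd ⟨x, by omega⟩
  rw [div_lt_iff₀ hdx] at hbx
  rw [(hasSum_atildeBD_mul_coe b d β hx).tsum_eq]
  calc (b x - d x + β x - B * x) / x ≤ ((c - 1) * d x + B - B * x) / x := by gcongr; linarith
    _ = (c - 1) * (d x / x) + (B / x - B) := by field_simp; ring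

/-- key verification in the proof of Corollary 3.5: for the
birth-and-death tumor growth model with nondecreasing death rates, limiting birth/death
ratio `ℓ < 1`, and summable reciprocal death rates, the matrix `Ã` satisfies the Lyapunov
condition of Theorem 2.1 with the linear Lyapunov function `V(x) = x`:
`(Σ_{y∈Λ} ã(x,y)·y)/x → −∞` as `x → ∞`. -/
theorem tumor_birth_death_lyapunov
    (b d β : ℕ → ℝ)
    (hb : ∀ x : ℕ, 1 ≤ x → 0 < b x)
    (hd : ∀ x : ℕ, 1 ≤ x → 0 < d x)
    (hβpos : ∀ x : ℕ, 1 ≤ x → 0 < β x)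
    (hβbdd : BddAbove (Set.range fun x : {n : ℕ // 1 ≤ n} => β (x : ℕ)))
    -- (a) d is nondecreasing
    (hmono : ∀ x : ℕ, 1 ≤ x → d x ≤ d (x + 1))
    -- (b) b(x)/d(x) → ℓ < 1
    (ℓ : ℝ) (hℓ : ℓ < 1)
    (hratio : Tendsto (fun x : ℕ => b x / d x) atTop (𝓝 ℓ))
    -- (c) Σ_{x≥1} 1/d(x) < ∞
    (hsum : Summable fun x : {n : ℕ // 1 ≤ n} => 1 / d x) :
    Tendsto
      (fun x : ℕ =>
        (∑' y : {n : ℕ // 1 ≤ n}, atildeBD b d β x (y : ℕ) * ((y : ℕ) : ℝ)) / x)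
      atTop atBot :=
  tumor_birth_death_lyapunov_general b d β hd hβbdd hmono ℓ hℓ hratio hsum
end
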